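/- Let q, r_0,…,r_N, r_{00},…,r_{(m−1)N}, g_0,…,g_{m−1} be finitely supported real-valued coefficient families (i.e., families p with p_{lk} = conj(p_{kl}), so that p(z,z̄) ∈ ℝ for all z) such that q = Σ_{j=0}^N r_j·r_j + Σ_{i=0}^{m−1} (Σ_{j=0}^N r_{ij}·r_{ij})·g_i as an identity of coefficient families (products meaning convolution). Then there exists a constant C ≥ 0, depending only on the r_j, r_{ij}, g_i, such that for every unital C*-algebra A, every δ ≥ 0, and every a ∈ A with ‖a‖ ≤ 1, ‖a a* − a* a‖ ≤ δ, and g_i(a,a*) ≥ 0 for i = 0,…,m−1, one has q(a,a*) ≥ −C·δ·1 in the order of self-adjoint elements of A. -/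

import Mathlib

open scoped ComplexConjugate

/-- Evaluation of a finitely supported coefficient family `p = (p_{kl})` at an element `a`
of a star `ℂ`-algebra: `p(a,a*) = ∑ p_{kl} a^k (a*)^l`. -/
noncomputable def polyEvalA {A : Type*} [Ring A] [StarRing A] [Algebra ℂ A]
    (p : (ℕ × ℕ) →₀ ℂ) (a : A) : A :=
  p.sum fun kl c => c • (a ^ kl.1 * star a ^ kl.2)

/-- Convolution of coefficient families, corresponding to the product of the associated
polynomial functions `∑ p_{kl} z^k conj(z)^l`. -/
noncomputable def polyConv (p q : (ℕ × ℕ) →₀ ℂ) : (ℕ × ℕ) →₀ ℂ :=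
  p.sum fun kl c => q.sum fun st d => Finsupp.single (kl.1 + st.1, kl.2 + st.2) (c * d)

/-- A coefficient family is real-valued iff `p_{lk} = conj (p_{kl})`, i.e. the associated
function `∑ p_{kl} z^k conj(z)^l` takes real values. -/
def IsRealFam (p : (ℕ × ℕ) →₀ ℂ) : Prop :=
  ∀ k l : ℕ, p (l, k) = conj (p (k, l))

/-! Put `P = ∑ⱼ rⱼ(a,a*)² + ∑ᵢⱼ rᵢⱼ(a,a*) gᵢ(a,a*) rᵢⱼ(a,a*)`, which is positive because the
`rⱼ(a,a*)`, `rᵢⱼ(a,a*)` are self-adjoint and the `gᵢ(a,a*)` are positive. Evaluation at `a` turns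
convolution into multiplication up to reordering `a^k a*^l a^s a*^t` into `a^(k+s) a*^(l+t)`,
which costs at most `l s ‖a a* - a* a‖` when `‖a‖ ≤ 1`. Summing these costs gives
`‖q(a,a*) - P‖ ≤ C δ`, hence `q(a,a*) ≥ P - C δ ≥ -C δ`. -/

open Finset

section Evaluation
variable {A : Type*} [Ring A] [StarRing A] [Algebra ℂ A]

noncomputable def polyEvalLinear (a : A) : ((ℕ × ℕ) →₀ ℂ) →ₗ[ℂ] A :=
  Finsupp.lsum ℂ fun kl => LinearMap.toSpanSingleton ℂ A (a ^ kl.1 * star a ^ kl.2)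

theorem polyEvalLinear_apply (a : A) (p : (ℕ × ℕ) →₀ ℂ) :
    polyEvalLinear a p = polyEvalA p a := rfl

theorem polyEvalA_sum {ι : Type*} (s : Finset ι) (f : ι → (ℕ × ℕ) →₀ ℂ) (a : A) :
    polyEvalA (∑ i ∈ s, f i) a = ∑ i ∈ s, polyEvalA (f i) a := by
  simp only [← polyEvalLinear_apply, map_sum]

theorem polyEvalA_add (p q : (ℕ × ℕ) →₀ ℂ) (a : A) :
    polyEvalA (p + q) a = polyEvalA p a + polyEvalA q a := by
  simp only [← polyEvalLinear_apply, map_add]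

theorem polyEvalA_polyConv (p q : (ℕ × ℕ) →₀ ℂ) (a : A) :
    polyEvalA (polyConv p q) a = p.sum fun kl c => q.sum fun st d =>
      (c * d) • (a ^ (kl.1 + st.1) * star a ^ (kl.2 + st.2)) := by
  simp only [polyConv, ← polyEvalLinear_apply, map_finsuppSum, polyEvalLinear,
    Finsupp.lsum_single, LinearMap.toSpanSingleton_apply]

theorem polyEvalA_mul_polyEvalA (p q : (ℕ × ℕ) →₀ ℂ) (a : A) :
    polyEvalA p a * polyEvalA q a = p.sum fun kl c => q.sum fun st d =>
      (c * d) • (a ^ kl.1 * star a ^ kl.2 * (a ^ st.1 * star a ^ st.2)) := by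
  rw [polyEvalA, Finsupp.sum_mul]
  simp only [polyEvalA, Finsupp.mul_sum, smul_mul_smul_comm]

theorem polyConv_comm (p q : (ℕ × ℕ) →₀ ℂ) : polyConv p q = polyConv q p := by
  unfold polyConv
  rw [Finsupp.sum_comm]
  simp only [add_comm, mul_comm]

theorem polyConv_sum_left {ι : Type*} (s : Finset ι) (f : ι → (ℕ × ℕ) →₀ ℂ)
    (q : (ℕ × ℕ) →₀ ℂ) : polyConv (∑ i ∈ s, f i) q = ∑ i ∈ s, polyConv (f i) q := by
  unfold polyConv
  rw [Finsupp.sum_finsetSum_index]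
  · simp
  · intro kl c c'
    simp only [add_mul, Finsupp.single_add, Finsupp.sum_add]

theorem isSelfAdjoint_polyEvalA [StarModule ℂ A] {p : (ℕ × ℕ) →₀ ℂ} (hp : IsRealFam p) (a : A) :
    IsSelfAdjoint (polyEvalA p a) := by
  have hswap (kl : ℕ × ℕ) : p kl.swap = conj (p kl) := hp kl.1 kl.2
  have hsupp (kl : ℕ × ℕ) : kl ∈ p.support ↔ kl.swap ∈ p.support := by simp [hswap]
  rw [IsSelfAdjoint, polyEvalA, Finsupp.sum, star_sum]
  refine Finset.sum_equiv (Equiv.prodComm ℕ ℕ) hsupp fun kl _ => ?_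
  simp [hswap]

end Evaluation

section Commutator
variable {A : Type*} [NormedRing A] [NormOneClass A] {x y : A}

theorem norm_pow_le_one (hx : ‖x‖ ≤ 1) (n : ℕ) : ‖x ^ n‖ ≤ 1 :=
  (norm_pow_le x n).trans (pow_le_one₀ (norm_nonneg x) hx)

theorem norm_pow_mul_sub_mul_pow_le (hx : ‖x‖ ≤ 1) (z : A) (n : ℕ) :
    ‖x ^ n * z - z * x ^ n‖ ≤ n * ‖x * z - z * x‖ := by
  induction n with
  | zero => simp
  | succ n ih =>
    calc ‖x ^ (n + 1) * z - z * x ^ (n + 1)‖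
        = ‖x * (x ^ n * z - z * x ^ n) + (x * z - z * x) * x ^ n‖ := by
          rw [pow_succ']; noncomm_ring
      _ ≤ ‖x‖ * ‖x ^ n * z - z * x ^ n‖ + ‖x * z - z * x‖ * ‖x ^ n‖ :=
          (norm_add_le _ _).trans (add_le_add (norm_mul_le _ _) (norm_mul_le _ _))
      _ ≤ 1 * (n * ‖x * z - z * x‖) + ‖x * z - z * x‖ * 1 := by
          gcongr; exact norm_pow_le_one hx n
      _ = (n + 1 : ℕ) * ‖x * z - z * x‖ := by push_cast; ring

theorem norm_pow_mul_pow_sub_le (hx : ‖x‖ ≤ 1) (hy : ‖y‖ ≤ 1) (m n : ℕ) :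
    ‖x ^ m * y ^ n - y ^ n * x ^ m‖ ≤ m * n * ‖x * y - y * x‖ :=
  calc ‖x ^ m * y ^ n - y ^ n * x ^ m‖ ≤ m * ‖x * y ^ n - y ^ n * x‖ :=
        norm_pow_mul_sub_mul_pow_le hx _ m
    _ = m * ‖y ^ n * x - x * y ^ n‖ := by rw [norm_sub_rev]
    _ ≤ m * (n * ‖y * x - x * y‖) := by gcongr; exact norm_pow_mul_sub_mul_pow_le hy x n
    _ = m * n * ‖x * y - y * x‖ := by rw [norm_sub_rev]; ring

end Commutator

section Monomial
variable {A : Type*} [NormedRing A] [StarRing A] [NormedStarGroup A] [NormOneClass A] {a : A}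

theorem norm_monomial_le_one (ha : ‖a‖ ≤ 1) (k l : ℕ) : ‖a ^ k * star a ^ l‖ ≤ 1 :=
  calc ‖a ^ k * star a ^ l‖ ≤ ‖a ^ k‖ * ‖star a ^ l‖ := norm_mul_le _ _
    _ ≤ 1 * 1 := by
        gcongr
        · exact norm_pow_le_one ha k
        · exact norm_pow_le_one (by rwa [norm_star]) l
    _ = 1 := one_mul 1

theorem norm_monomial_mul_monomial_sub_le (ha : ‖a‖ ≤ 1) (k l s t : ℕ) :
    ‖a ^ (k + s) * star a ^ (l + t) - a ^ k * star a ^ l * (a ^ s * star a ^ t)‖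
      ≤ l * s * ‖a * star a - star a * a‖ := by
  have hstar : ‖star a‖ ≤ 1 := by rwa [norm_star]
  calc ‖a ^ (k + s) * star a ^ (l + t) - a ^ k * star a ^ l * (a ^ s * star a ^ t)‖
      = ‖a ^ k * (a ^ s * star a ^ l - star a ^ l * a ^ s) * star a ^ t‖ := by
        rw [pow_add, pow_add]; noncomm_ring
    _ ≤ ‖a ^ k‖ * ‖a ^ s * star a ^ l - star a ^ l * a ^ s‖ * ‖star a ^ t‖ :=
        (norm_mul_le _ _).trans (mul_le_mul_of_nonneg_right (norm_mul_le _ _) (norm_nonneg _))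
    _ ≤ 1 * (s * l * ‖a * star a - star a * a‖) * 1 := by
        gcongr
        · exact norm_pow_le_one ha k
        · exact norm_pow_mul_pow_sub_le ha hstar s l
        · exact norm_pow_le_one hstar t
    _ = l * s * ‖a * star a - star a * a‖ := by ring

end Monomial

/-- The factor `1 + k + l` bounds both the norm `1` of a monomial and its share of the
reordering cost `l * s` in a product of two monomials. -/
noncomputable def polyWeight (p : (ℕ × ℕ) →₀ ℂ) : ℝ :=
  p.sum fun kl c => ‖c‖ * (1 + kl.1 + kl.2)

theorem polyWeight_nonneg (p : (ℕ × ℕ) →₀ ℂ) : 0 ≤ polyWeight p :=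
  sum_nonneg fun _ _ => by positivity

section Estimates
variable {A : Type*} [NormedRing A] [StarRing A] [NormedStarGroup A] [NormedAlgebra ℂ A]
  [NormOneClass A] {a : A}

theorem norm_polyEvalA_le (ha : ‖a‖ ≤ 1) (p : (ℕ × ℕ) →₀ ℂ) :
    ‖polyEvalA p a‖ ≤ polyWeight p := by
  refine (norm_sum_le _ _).trans (sum_le_sum fun kl _ => ?_)
  rw [norm_smul]
  calc ‖p kl‖ * ‖a ^ kl.1 * star a ^ kl.2‖ ≤ ‖p kl‖ * 1 := by
        gcongr; exact norm_monomial_le_one ha _ _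
    _ ≤ ‖p kl‖ * (1 + kl.1 + kl.2) := by gcongr; linarith

theorem dist_polyEvalA_polyConv_le (ha : ‖a‖ ≤ 1) (p q : (ℕ × ℕ) →₀ ℂ) :
    dist (polyEvalA (polyConv p q) a) (polyEvalA p a * polyEvalA q a)
      ≤ polyWeight p * polyWeight q * ‖a * star a - star a * a‖ := by
  set δ := ‖a * star a - star a * a‖
  calc dist (polyEvalA (polyConv p q) a) (polyEvalA p a * polyEvalA q a)
      = ‖∑ kl ∈ p.support, ∑ st ∈ q.support, (p kl * q st) •
          (a ^ (kl.1 + st.1) * star a ^ (kl.2 + st.2)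
            - a ^ kl.1 * star a ^ kl.2 * (a ^ st.1 * star a ^ st.2))‖ := by
        rw [dist_eq_norm, polyEvalA_polyConv, polyEvalA_mul_polyEvalA]
        simp only [Finsupp.sum, ← sum_sub_distrib, ← smul_sub]
    _ ≤ ∑ kl ∈ p.support, ∑ st ∈ q.support,
          ‖p kl‖ * (1 + kl.1 + kl.2) * (‖q st‖ * (1 + st.1 + st.2)) * δ := by
        refine (norm_sum_le _ _).trans (sum_le_sum fun kl _ =>
          (norm_sum_le _ _).trans (sum_le_sum fun st _ => ?_))
        have hls : (kl.2 * st.1 : ℝ) ≤ (1 + kl.1 + kl.2) * (1 + st.1 + st.2) := by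
          gcongr <;> linarith
        rw [norm_smul, norm_mul]
        calc ‖p kl‖ * ‖q st‖ * ‖_‖ ≤ ‖p kl‖ * ‖q st‖ * (kl.2 * st.1 * δ) := by
              gcongr; exact norm_monomial_mul_monomial_sub_le ha _ _ _ _
          _ ≤ ‖p kl‖ * ‖q st‖ * ((1 + kl.1 + kl.2) * (1 + st.1 + st.2) * δ) := by gcongr
          _ = _ := by ring
    _ = polyWeight p * polyWeight q * δ := by
        rw [polyWeight, polyWeight, Finsupp.sum, Finsupp.sum, sum_mul_sum, sum_mul]
        simp only [sum_mul]

theorem norm_polyEvalA_mul_sub_mul_le (ha : ‖a‖ ≤ 1) (p q : (ℕ × ℕ) →₀ ℂ) :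
    ‖polyEvalA p a * polyEvalA q a - polyEvalA q a * polyEvalA p a‖
      ≤ 2 * polyWeight p * polyWeight q * ‖a * star a - star a * a‖ := by
  calc ‖polyEvalA p a * polyEvalA q a - polyEvalA q a * polyEvalA p a‖
      = dist (polyEvalA p a * polyEvalA q a) (polyEvalA q a * polyEvalA p a) :=
        (dist_eq_norm _ _).symm
    _ ≤ dist (polyEvalA (polyConv p q) a) (polyEvalA p a * polyEvalA q a)
          + dist (polyEvalA (polyConv p q) a) (polyEvalA q a * polyEvalA p a) :=
        dist_triangle_left _ _ _
    _ ≤ polyWeight p * polyWeight q * ‖a * star a - star a * a‖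
          + polyWeight q * polyWeight p * ‖a * star a - star a * a‖ := by
        gcongr
        · exact dist_polyEvalA_polyConv_le ha p q
        · rw [polyConv_comm]; exact dist_polyEvalA_polyConv_le ha q p
    _ = 2 * polyWeight p * polyWeight q * ‖a * star a - star a * a‖ := by ring

theorem dist_polyEvalA_polyConv_polyConv_le (ha : ‖a‖ ≤ 1) (p g : (ℕ × ℕ) →₀ ℂ) :
    dist (polyEvalA (polyConv (polyConv p p) g) a)
        (polyEvalA p a * polyEvalA g a * polyEvalA p a)
      ≤ (polyWeight (polyConv p p) + 3 * polyWeight p ^ 2) * polyWeight g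
          * ‖a * star a - star a * a‖ := by
  set δ := ‖a * star a - star a * a‖
  set P := polyEvalA p a
  set G := polyEvalA g a
  calc dist (polyEvalA (polyConv (polyConv p p) g) a) (P * G * P)
      ≤ dist (polyEvalA (polyConv (polyConv p p) g) a) (polyEvalA (polyConv p p) a * G)
        + dist (polyEvalA (polyConv p p) a * G) (P * P * G) + dist (P * P * G) (P * G * P) :=
        dist_triangle4 _ _ _ _
    _ ≤ polyWeight (polyConv p p) * polyWeight g * δ
        + dist (polyEvalA (polyConv p p) a) (P * P) * ‖G‖ + ‖P‖ * ‖P * G - G * P‖ := by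
        gcongr
        · exact dist_polyEvalA_polyConv_le ha _ _
        · rw [dist_eq_norm, dist_eq_norm, ← sub_mul]; exact norm_mul_le _ _
        · rw [dist_eq_norm, mul_assoc, mul_assoc, ← mul_sub]; exact norm_mul_le _ _
    _ ≤ polyWeight (polyConv p p) * polyWeight g * δ
        + polyWeight p * polyWeight p * δ * polyWeight g
        + polyWeight p * (2 * polyWeight p * polyWeight g * δ) := by
        have := polyWeight_nonneg p
        gcongr
        · exact dist_polyEvalA_polyConv_le ha p p
        · exact norm_polyEvalA_le ha g
        · exact norm_polyEvalA_le ha p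
        · exact norm_polyEvalA_mul_sub_mul_le ha p g
    _ = (polyWeight (polyConv p p) + 3 * polyWeight p ^ 2) * polyWeight g * δ := by ring

end Estimates

theorem neg_algebraMap_le_of_dist_le {A : Type*} [CStarAlgebra A] [PartialOrder A]
    [StarOrderedRing A] {x y : A} {c : ℝ} (hx : IsSelfAdjoint x) (hy : 0 ≤ y)
    (h : dist x y ≤ c) : -algebraMap ℝ A c ≤ x :=
  calc -algebraMap ℝ A c ≤ -algebraMap ℝ A ‖x - y‖ := by
        rw [← dist_eq_norm]; exact neg_le_neg (algebraMap_mono A h)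
    _ ≤ x - y := (hx.sub hy.isSelfAdjoint).neg_algebraMap_norm_le_self
    _ ≤ x := sub_le_self x hy

theorem stmt4.{u} (N m : ℕ) (q : (ℕ × ℕ) →₀ ℂ)
    (r : Fin (N + 1) → (ℕ × ℕ) →₀ ℂ) (rr : Fin m → Fin (N + 1) → (ℕ × ℕ) →₀ ℂ)
    (g : Fin m → (ℕ × ℕ) →₀ ℂ)
    (hqreal : IsRealFam q) (hrreal : ∀ j, IsRealFam (r j))
    (hrrreal : ∀ i j, IsRealFam (rr i j)) (hgreal : ∀ i, IsRealFam (g i))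
    (hrep : q = ∑ j, polyConv (r j) (r j)
        + ∑ i, polyConv (∑ j, polyConv (rr i j) (rr i j)) (g i)) :
    ∃ C : ℝ, 0 ≤ C ∧
      ∀ (A : Type u) [CStarAlgebra A] [PartialOrder A] [StarOrderedRing A],
        ∀ δ : ℝ, 0 ≤ δ → ∀ a : A, ‖a‖ ≤ 1 → ‖a * star a - star a * a‖ ≤ δ →
          (∀ i, 0 ≤ polyEvalA (g i) a) →
            ((-(C * δ) : ℝ) : ℂ) • (1 : A) ≤ polyEvalA q a := by
  set C : ℝ := ∑ j, polyWeight (r j) * polyWeight (r j) + ∑ i, ∑ j,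
    (polyWeight (polyConv (rr i j) (rr i j)) + 3 * polyWeight (rr i j) ^ 2) * polyWeight (g i)
  have hC : 0 ≤ C := add_nonneg (sum_nonneg fun j _ => mul_self_nonneg _)
    (sum_nonneg fun i _ => sum_nonneg fun j _ => mul_nonneg
      (add_nonneg (polyWeight_nonneg _) (by positivity)) (polyWeight_nonneg _))
  refine ⟨C, hC, ?_⟩
  intro A _ _ _ δ _ a ha hcomm hg
  rcases subsingleton_or_nontrivial A with _ | _
  · exact (Subsingleton.elim _ _).le
  set P : A := ∑ j, polyEvalA (r j) a * polyEvalA (r j) a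
    + ∑ i, ∑ j, polyEvalA (rr i j) a * polyEvalA (g i) a * polyEvalA (rr i j) a
  have hP : 0 ≤ P := add_nonneg
    (sum_nonneg fun j _ => (isSelfAdjoint_polyEvalA (hrreal j) a).mul_self_nonneg)
    (sum_nonneg fun i _ => sum_nonneg fun j _ =>
      (isSelfAdjoint_polyEvalA (hrrreal i j) a).conjugate_nonneg (hg i))
  have hqP : dist (polyEvalA q a) P ≤ C * ‖a * star a - star a * a‖ := by
    simp only [hrep, polyConv_sum_left, polyEvalA_add, polyEvalA_sum, C, P]
    refine (dist_add_add_le_of_le ?_ ?_).trans_eq (add_mul _ _ _).symm <;> simp only [sum_mul]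
    · exact dist_sum_sum_le_of_le _ fun j _ => dist_polyEvalA_polyConv_le ha _ _
    · exact dist_sum_sum_le_of_le _ fun i _ => dist_sum_sum_le_of_le _ fun j _ =>
        dist_polyEvalA_polyConv_polyConv_le ha _ _
  rw [Complex.coe_smul, ← Algebra.algebraMap_eq_smul_one, map_neg]
  exact neg_algebraMap_le_of_dist_le (isSelfAdjoint_polyEvalA hqreal a) hP
    (hqP.trans (by gcongr))
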